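/- arXiv:2009.02272 — 3 statements merged into one kernel-verified Lean document; each statement's English description precedes it below -/
import Mathlib

section
/- For every natural number n, p^B_{n,n+1}(x) = x·B_n(x); equivalently, p^B_{n,n+1}(x) = (1−x)^{n+1} · Σ_{m≥1} (2m−1)^n x^m in ℝ⟦x⟧. -/
open Polynomial PowerSeries

/-- The polynomials `p^B_{n,k}` defined recursively as in
Proposition (e): `p^B_{0,0} = 1`, `p^B_{0,1} = x`,
`p^B_{n+1,0} = ∑_{i=0}^{n+1} p^B_{n,i}`,
`p^B_{n+1,k} = 2x ∑_{i=0}^{k-1} p^B_{n,i} + 2 ∑_{i=k}^{n+1} p^B_{n,i}` for `1 ≤ k ≤ n+1`, and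
`p^B_{n+1,n+2} = x ∑_{i=0}^{n+1} p^B_{n,i}`. -/
noncomputable def pB : ℕ → ℕ → Polynomial ℝ
  | 0, 0 => 1
  | 0, 1 => Polynomial.X
  | 0, _ + 2 => 0
  | n + 1, 0 => ∑ i ∈ Finset.range (n + 2), pB n i
  | n + 1, k + 1 =>
      if k + 1 ≤ n + 1 then
        2 * Polynomial.X * (∑ i ∈ Finset.range (k + 1), pB n i) +
          2 * ∑ i ∈ Finset.Icc (k + 1) (n + 1), pB n i
      else if k + 1 = n + 2 then
        Polynomial.X * ∑ i ∈ Finset.range (n + 2), pB n i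
      else 0
  termination_by n _ => n

/-!
Dividing by `(1 - x)^{n+1}`, the recursion for `p^B_{n,k}` becomes, coefficient by coefficient, a
first-order difference equation in `m`, because multiplication by `1 - x` is the backward
difference. The quotients have closed-form coefficients: `(2m+1)^n` for `k = 0`,
`4m (2m+1)^{n-k} (2m-1)^{k-1}` for `1 ≤ k ≤ n`, and `(2m-1)^n` (for `m ≥ 1`) for `k = n + 1`.
Their partial sums over `k` telescope to `(2m+1)^n + 2m (2m+1)^{n-k} ((2m+1)^k - (2m-1)^k)`,
which is exactly what the difference equations require. For `k = n + 1` the quotient is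
`x ∑ₘ (2m+1)^n x^m = x B_n(x) / (1 - x)^{n+1}`.
-/

namespace PowerSeries

variable {R : Type*}

theorem coeff_ofNat_mul [Semiring R] (a : ℕ) [a.AtLeastTwo] (f : R⟦X⟧) (m : ℕ) :
    coeff m (ofNat(a) * f) = ofNat(a) * coeff m f := by
  rw [← map_ofNat (C (R := R)) a, coeff_C_mul]

@[simp] theorem mk_zero [Semiring R] : mk (0 : ℕ → R) = 0 := by
  ext m
  simp

theorem mk_sum [Semiring R] {ι : Type*} (s : Finset ι) (f : ι → ℕ → R) :
    (mk fun m => ∑ i ∈ s, f i m) = ∑ i ∈ s, mk (f i) := by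
  ext m
  simp only [map_sum, coeff_mk]

theorem one_sub_X_mul_mk_eq [Ring R] {f : ℕ → R} {g : R⟦X⟧} (h0 : coeff 0 g = f 0)
    (hsucc : ∀ m, coeff (m + 1) g = f (m + 1) - f m) : (1 - X) * mk f = g := by
  ext m
  rcases m with _ | m
  · simp [sub_mul, h0]
  · simp [sub_mul, coeff_succ_X_mul, hsucc]

end PowerSeries

namespace Polynomial

variable {R : Type*} [Semiring R]

theorem coe_sum {ι : Type*} (s : Finset ι) (f : ι → R[X]) :
    ((∑ i ∈ s, f i : R[X]) : R⟦X⟧) = ∑ i ∈ s, (f i : R⟦X⟧) :=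
  map_sum coeToPowerSeries.ringHom f s

theorem coe_ofNat (a : ℕ) [a.AtLeastTwo] : ((ofNat(a) : R[X]) : R⟦X⟧) = ofNat(a) :=
  map_ofNat coeToPowerSeries.ringHom a

end Polynomial

theorem pB_succ_zero (n : ℕ) : pB (n + 1) 0 = ∑ i ∈ Finset.range (n + 2), pB n i := by
  rw [pB]

theorem pB_succ_succ_of_le {n k : ℕ} (hk : k ≤ n) :
    pB (n + 1) (k + 1) =
      2 * Polynomial.X * ∑ i ∈ Finset.range (k + 1), pB n i +
        2 * ∑ i ∈ Finset.Icc (k + 1) (n + 1), pB n i := by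
  rw [pB, if_pos (by omega)]

theorem pB_succ_succ_self (n : ℕ) :
    pB (n + 1) (n + 2) = Polynomial.X * ∑ i ∈ Finset.range (n + 2), pB n i := by
  rw [pB, if_neg (by omega), if_pos rfl]

theorem pB_of_lt {n k : ℕ} (hk : n + 1 < k) : pB n k = 0 := by
  match n, k with
  | 0, k + 2 => rw [pB]
  | n + 1, k + 1 => rw [pB, if_neg (by omega), if_neg (by omega)]

/-- `pB n k / (1 - X) ^ (n + 1) = ∑ₘ pBCoeff n k m • X ^ m`, see `coe_pB`. -/
noncomputable def pBCoeff (n k m : ℕ) : ℝ :=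
  if k = 0 then (2 * m + 1 : ℝ) ^ n
  else if k ≤ n then 4 * m * (2 * m + 1 : ℝ) ^ (n - k) * (2 * m - 1 : ℝ) ^ (k - 1)
  else if k = n + 1 then (if m = 0 then 0 else (2 * m - 1 : ℝ) ^ n)
  else 0

theorem pBCoeff_eq_zero {n k : ℕ} (hk : n + 1 < k) : pBCoeff n k = 0 := by
  ext m
  simp [pBCoeff, show k ≠ 0 by omega, show ¬k ≤ n by omega, show k ≠ n + 1 by omega]

section pBCoeff

variable (n m : ℕ)

@[simp] theorem pBCoeff_zero : pBCoeff n 0 m = (2 * m + 1) ^ n := by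
  simp [pBCoeff]

theorem pBCoeff_succ_of_lt {k : ℕ} (hk : k < n) :
    pBCoeff n (k + 1) m = 4 * m * (2 * m + 1) ^ (n - (k + 1)) * (2 * m - 1) ^ k := by
  simp [pBCoeff, Nat.succ_le_of_lt hk]

theorem pBCoeff_succ_self :
    pBCoeff n (n + 1) m = if m = 0 then 0 else (2 * m - 1 : ℝ) ^ n := by
  simp [pBCoeff]

theorem sum_range_pBCoeff_of_le {k : ℕ} (hk : k ≤ n) :
    ∑ i ∈ Finset.range (k + 1), pBCoeff n i m =
      (2 * m + 1) ^ n + 2 * m * (2 * m + 1) ^ (n - k) * ((2 * m + 1) ^ k - (2 * m - 1) ^ k) := by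
  induction k with
  | zero => simp
  | succ k ih =>
    rw [Finset.sum_range_succ, ih (by omega), pBCoeff_succ_of_lt n m hk,
      show n - k = n - (k + 1) + 1 by omega]
    ring

theorem sum_range_pBCoeff :
    ∑ i ∈ Finset.range (n + 2), pBCoeff n i m =
      if m = 0 then 1 else (2 * m + 1 : ℝ) ^ (n + 1) - (2 * m - 1 : ℝ) ^ (n + 1) := by
  rw [Finset.sum_range_succ, sum_range_pBCoeff_of_le n m le_rfl, pBCoeff_succ_self, Nat.sub_self]
  split_ifs with hm
  · simp [hm]
  · ring

end pBCoeff

theorem one_sub_X_mul_mk_pBCoeff_succ_zero (n : ℕ) :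
    (1 - PowerSeries.X) * mk (pBCoeff (n + 1) 0) =
      ∑ i ∈ Finset.range (n + 2), mk (pBCoeff n i) := by
  rw [← mk_sum]
  refine one_sub_X_mul_mk_eq ?_ fun m => ?_
  · simp [sum_range_pBCoeff]
  · simp only [coeff_mk, sum_range_pBCoeff, pBCoeff_zero, if_neg m.succ_ne_zero]
    push_cast
    ring

theorem one_sub_X_mul_mk_pBCoeff_succ_succ {n k : ℕ} (hk : k ≤ n) :
    (1 - PowerSeries.X) * mk (pBCoeff (n + 1) (k + 1)) =
      2 * PowerSeries.X * ∑ i ∈ Finset.range (k + 1), mk (pBCoeff n i) +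
        2 * ∑ i ∈ Finset.Icc (k + 1) (n + 1), mk (pBCoeff n i) := by
  have hIcc : ∑ i ∈ Finset.Icc (k + 1) (n + 1), mk (pBCoeff n i) =
      ∑ i ∈ Finset.range (n + 2), mk (pBCoeff n i) -
        ∑ i ∈ Finset.range (k + 1), mk (pBCoeff n i) := by
    rw [eq_sub_iff_add_eq', ← Finset.Ico_add_one_right_eq_Icc]
    exact Finset.sum_range_add_sum_Ico _ (by omega)
  rw [hIcc, ← mk_sum, ← mk_sum, mul_assoc]
  have hk' : k < n + 1 := Nat.lt_succ_of_le hk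
  refine one_sub_X_mul_mk_eq ?_ fun m => ?_
  · simp [sum_range_pBCoeff, sum_range_pBCoeff_of_le _ _ hk, pBCoeff_succ_of_lt _ _ hk']
  · simp only [map_add, map_sub, PowerSeries.coeff_ofNat_mul, coeff_succ_X_mul, coeff_mk,
      sum_range_pBCoeff, sum_range_pBCoeff_of_le _ _ hk, pBCoeff_succ_of_lt _ _ hk',
      if_neg m.succ_ne_zero]
    obtain ⟨e, rfl⟩ := Nat.exists_eq_add_of_le hk
    simp only [show k + e + 1 - (k + 1) = e by omega, Nat.add_sub_cancel_left]
    push_cast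
    ring

theorem one_sub_X_mul_mk_pBCoeff_succ_succ_self (n : ℕ) :
    (1 - PowerSeries.X) * mk (pBCoeff (n + 1) (n + 2)) =
      PowerSeries.X * ∑ i ∈ Finset.range (n + 2), mk (pBCoeff n i) := by
  rw [← mk_sum]
  refine one_sub_X_mul_mk_eq ?_ fun m => ?_
  · simp [pBCoeff_succ_self]
  · rcases m with _ | m
    · norm_num [pBCoeff_succ_self, sum_range_pBCoeff]
    · simp only [coeff_succ_X_mul, coeff_mk, pBCoeff_succ_self (n + 1), sum_range_pBCoeff,
        if_neg m.succ_ne_zero]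
      push_cast
      ring

theorem coe_pB (n k : ℕ) :
    (pB n k : ℝ⟦X⟧) = (1 - PowerSeries.X) ^ (n + 1) * mk (pBCoeff n k) := by
  induction n generalizing k with
  | zero =>
    rcases k with _ | _ | k
    · rw [pB.eq_1, Polynomial.coe_one, pow_one, eq_comm]
      refine one_sub_X_mul_mk_eq ?_ fun m => ?_ <;> simp
    · rw [pB.eq_2, Polynomial.coe_X, pow_one, eq_comm]
      refine one_sub_X_mul_mk_eq ?_ fun m => ?_ <;> simp [pBCoeff_succ_self, PowerSeries.coeff_X]
      rcases m with _ | m <;> simp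
    · have hk : 0 + 1 < k + 2 := by omega
      rw [pB_of_lt hk, pBCoeff_eq_zero hk]
      simp
  | succ n ih =>
    have hsum (s : Finset ℕ) : ((∑ i ∈ s, pB n i : ℝ[X]) : ℝ⟦X⟧) =
        (1 - PowerSeries.X) ^ (n + 1) * ∑ i ∈ s, mk (pBCoeff n i) := by
      rw [Polynomial.coe_sum, Finset.mul_sum]
      exact Finset.sum_congr rfl fun i _ => ih i
    rw [pow_succ, mul_assoc]
    rcases k with _ | k
    · rw [pB_succ_zero, hsum, one_sub_X_mul_mk_pBCoeff_succ_zero]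
    obtain hk | rfl | hk : k ≤ n ∨ k = n + 1 ∨ n + 1 < k := by omega
    · rw [pB_succ_succ_of_le hk, one_sub_X_mul_mk_pBCoeff_succ_succ hk]
      simp only [Polynomial.coe_add, Polynomial.coe_mul, Polynomial.coe_ofNat, Polynomial.coe_X,
        hsum]
      ring
    · rw [pB_succ_succ_self, one_sub_X_mul_mk_pBCoeff_succ_succ_self, Polynomial.coe_mul,
        Polynomial.coe_X, hsum]
      ring
    · rw [pB_of_lt (Nat.succ_lt_succ hk), pBCoeff_eq_zero (Nat.succ_lt_succ hk)]
      simp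

theorem mk_pBCoeff_succ_self (n : ℕ) :
    mk (pBCoeff n (n + 1)) = PowerSeries.X * mk fun m => (2 * m + 1 : ℝ) ^ n := by
  ext m
  rcases m with _ | m
  · simp [pBCoeff_succ_self]
  · simp only [coeff_mk, PowerSeries.coeff_succ_X_mul, pBCoeff_succ_self, if_neg m.succ_ne_zero]
    push_cast
    ring

/-- `p^B_{n,n+1}(x) = x ⬝ B_n(x)`; equivalently,
`p^B_{n,n+1}(x) = (1-x)^{n+1} ⬝ ∑_{m ≥ 1} (2m-1)^n x^m` in `ℝ⟦x⟧`.  Here `B` is the type `B`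
Eulerian polynomial, determined by `∑_{m ≥ 0} (2m+1)^n x^m = B_n(x)/(1-x)^{n+1}`. -/
theorem pB_top (n : ℕ) (B : Polynomial ℝ)
    (hB : (B : PowerSeries ℝ) =
      (1 - PowerSeries.X) ^ (n + 1) * PowerSeries.mk (fun m => ((2 * m + 1 : ℝ)) ^ n)) :
    pB n (n + 1) = Polynomial.X * B ∧
      (pB n (n + 1) : PowerSeries ℝ) =
        (1 - PowerSeries.X) ^ (n + 1) *
          PowerSeries.mk (fun m => if m = 0 then 0 else (2 * m - 1 : ℝ) ^ n) := by
  refine ⟨?_, by rw [coe_pB, funext (pBCoeff_succ_self n)]⟩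
  rw [← Polynomial.coe_inj, Polynomial.coe_mul, Polynomial.coe_X, coe_pB, hB,
    mk_pBCoeff_succ_self]
  ring
end

section
/- For every natural number n and every k ∈ {0,1,…,n+1}, the following recurrence holds: p^B_{n+1,k+1}(x) = 2·p^B_{n+1,0}(x) + 2(x−1)·p^B_{n,0}(x) if k = 0; p^B_{n+1,k+1}(x) = p^B_{n+1,k}(x) + 2(x−1)·p^B_{n,k}(x) if 1 ≤ k ≤ n; and p^B_{n+1,n+2}(x) = (1/2)·p^B_{n+1,n+1}(x) + (x−1)·p^B_{n,n+1}(x) if k = n+1. -/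
/-! Every row `p^B_{n+1,·}` is, up to a factor `2` away from the two ends, a sum
`x ∑_{i<k} p^B_{n,i} + ∑_{k≤i≤n+1} p^B_{n,i}` whose split point `k` moves by one from each entry
to the next; moving it past `i` adds `(x - 1) p^B_{n,i}`. -/

open Polynomial PowerSeries

open Finset

section TiltedSum

variable {R : Type*} [CommRing R]

def tiltedSum (c : R) (f : ℕ → R) (m k : ℕ) : R :=
  c * ∑ i ∈ range k, f i + ∑ i ∈ Ico k m, f i

theorem tiltedSum_zero (c : R) (f : ℕ → R) (m : ℕ) :
    tiltedSum c f m 0 = ∑ i ∈ range m, f i := by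
  rw [tiltedSum, range_zero, sum_empty, mul_zero, zero_add, range_eq_Ico]

theorem tiltedSum_self (c : R) (f : ℕ → R) (m : ℕ) :
    tiltedSum c f m m = c * ∑ i ∈ range m, f i := by
  rw [tiltedSum, Ico_self, sum_empty, add_zero]

theorem tiltedSum_succ (c : R) (f : ℕ → R) {m k : ℕ} (hk : k < m) :
    tiltedSum c f m (k + 1) = tiltedSum c f m k + (c - 1) * f k := by
  rw [tiltedSum, tiltedSum, sum_range_succ, sum_eq_sum_Ico_succ_bot hk]
  ring

end TiltedSum

theorem pB_succ_zero_s7 (n : ℕ) : pB (n + 1) 0 = tiltedSum Polynomial.X (pB n) (n + 2) 0 := by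
  rw [tiltedSum_zero, pB]

theorem pB_succ_of_pos_of_le {n k : ℕ} (hk₀ : 0 < k) (hk : k ≤ n + 1) :
    pB (n + 1) k = 2 * tiltedSum Polynomial.X (pB n) (n + 2) k := by
  obtain ⟨j, rfl⟩ : ∃ j, k = j + 1 := ⟨k - 1, by omega⟩
  rw [pB, if_pos hk, tiltedSum, ← Ico_add_one_right_eq_Icc, mul_add, mul_assoc]
  rfl

theorem pB_succ_succ_self_s7 (n : ℕ) :
    pB (n + 1) (n + 2) = tiltedSum Polynomial.X (pB n) (n + 2) (n + 2) := by
  rw [tiltedSum_self, pB, if_neg (by omega), if_pos rfl]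

/-- Proposition (d): for `k ∈ {0,1,…,n+1}`,
`p^B_{n+1,k+1} = 2 p^B_{n+1,0} + 2(x-1) p^B_{n,0}` if `k = 0`;
`p^B_{n+1,k+1} = p^B_{n+1,k} + 2(x-1) p^B_{n,k}` if `1 ≤ k ≤ n`; and
`p^B_{n+1,n+2} = (1/2) p^B_{n+1,n+1} + (x-1) p^B_{n,n+1}` if `k = n+1`. -/
theorem pB_recurrence (n k : ℕ) (hk : k ≤ n + 1) :
    pB (n + 1) (k + 1) =
      if k = 0 then
        2 * pB (n + 1) 0 + 2 * (Polynomial.X - 1) * pB n 0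
      else if k ≤ n then
        pB (n + 1) k + 2 * (Polynomial.X - 1) * pB n k
      else
        Polynomial.C (1 / 2 : ℝ) * pB (n + 1) (n + 1) + (Polynomial.X - 1) * pB n (n + 1) := by
  have hstep := tiltedSum_succ (Polynomial.X : ℝ[X]) (pB n) (show k < n + 2 by omega)
  split_ifs with hk₀ hkn
  · subst hk₀
    rw [zero_add] at hstep ⊢
    rw [pB_succ_of_pos_of_le one_pos (by omega), pB_succ_zero_s7, hstep]
    ring
  · rw [pB_succ_of_pos_of_le (by omega) (by omega), pB_succ_of_pos_of_le (by omega) hk, hstep]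
    ring
  · obtain rfl : k = n + 1 := by omega
    have hhalf : Polynomial.C (1 / 2 : ℝ) * 2 = 1 := by
      rw [← Polynomial.C_ofNat, ← Polynomial.C_mul]
      norm_num
    rw [pB_succ_succ_self_s7, hstep, pB_succ_of_pos_of_le (by omega) le_rfl, ← mul_assoc, hhalf]
    ring
end

section
/- For every natural number n and every k ∈ {0,1,…,n+1}, write p^B_{n,k}(x) = Σ_{i=0}^{n+1} a_i x^i. Then the coefficient sequence (a_0, a_1, …, a_{n+1}) is unimodal with a peak at position p, i.e., a_0 ≤ a_1 ≤ ⋯ ≤ a_p and a_p ≥ a_{p+1} ≥ ⋯ ≥ a_{n+1}, where p = (n+1)/2 if n is odd, p = n/2 if n is even and k ≤ n/2, and p = n/2 + 1 if n is even and k ≥ n/2 + 1. -/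
/-!
Write `c n k i` for the coefficient of `x ^ i` in `p^B_{n,k}`, for all `i : ℤ`; indexing by `ℤ`
makes the reflection `i ↦ n + 1 - i` total and turns nonnegativity of the coefficients into
rising from index `-1`. Up to a positive factor, `p^B_{n+1,k} = x ∑_{j<k} p^B_{n,j} +
∑_{j≥k} p^B_{n,j}`, which gives by induction the symmetry `c n k i = c n (n+1-k) (n+1-i)`.
As the peaks of `p^B_{n,k}` and `p^B_{n,n+1-k}` add up to `n + 1`, the symmetry turns the rising
half of unimodality into the falling half, so only the rising half needs an induction.
All peaks at level `n` are `m` or `m + 1`, where `m = ⌊(n+1)/2⌋`, so below `m` every summand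
rises. In the one remaining step, from `m` to `m + 1`, the symmetry rewrites the increment as
`∑_{j<k} Δ(c n j)(m-1) - ∑_{j<n+2-k} Δ(c n j)(n-m)`, where `Δ f i = f (i+1) - f i`; the two sums
are compared term by term once the terms with `k ≤ j ≤ n+1-k`, which cancel in pairs when `n` is
even, are discarded.
-/

open Polynomial PowerSeries

open Finset

section CoeffZ

variable {R : Type*} [Semiring R]

def coeffZ (p : R[X]) : ℤ → R
  | (i : ℕ) => p.coeff i
  | Int.negSucc _ => 0

@[simp]
theorem coeffZ_natCast (p : R[X]) (i : ℕ) : coeffZ p i = p.coeff i := rfl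

theorem coeffZ_of_neg (p : R[X]) {i : ℤ} (hi : i < 0) : coeffZ p i = 0 := by
  rcases i with i | i
  · exact absurd hi (Int.natCast_nonneg i).not_gt
  · rfl

theorem coeffZ_add (p q : R[X]) (i : ℤ) : coeffZ (p + q) i = coeffZ p i + coeffZ q i := by
  cases i <;> simp [coeffZ]

theorem coeffZ_sum {ι : Type*} (s : Finset ι) (p : ι → R[X]) (i : ℤ) :
    coeffZ (∑ j ∈ s, p j) i = ∑ j ∈ s, coeffZ (p j) i := by
  cases i <;> simp [coeffZ]

theorem coeffZ_smul (a : R) (p : R[X]) (i : ℤ) : coeffZ (a • p) i = a * coeffZ p i := by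
  cases i <;> simp [coeffZ]

theorem coeffZ_X_mul (p : R[X]) (i : ℤ) : coeffZ (Polynomial.X * p) i = coeffZ p (i - 1) := by
  rcases i with (_ | i) | i
  · rw [coeffZ_of_neg p (by norm_num)]
    exact coeff_X_mul_zero p
  · simp [coeffZ]
  · rw [coeffZ_of_neg _ (by omega), coeffZ_of_neg _ (by omega)]

theorem coeffZ_one (i : ℤ) : coeffZ (1 : R[X]) i = if i = 0 then 1 else 0 := by
  rcases i with i | i
  · simp [coeffZ, Polynomial.coeff_one]
  · simp [coeffZ]

theorem coeffZ_X (i : ℤ) : coeffZ (Polynomial.X : R[X]) i = if i = 1 then 1 else 0 := by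
  rw [← mul_one Polynomial.X, coeffZ_X_mul, coeffZ_one]
  simp only [sub_eq_zero]

end CoeffZ

def peak (n k : ℕ) : ℕ := if Even n then (if k ≤ n / 2 then n / 2 else n / 2 + 1) else (n + 1) / 2

theorem peak_add_peak_sub {n k : ℕ} (hk : k ≤ n + 1) : peak n k + peak n (n + 1 - k) = n + 1 := by
  simp only [peak, Nat.even_iff]
  split_ifs <;> omega

theorem half_le_peak (n k : ℕ) : (n + 1) / 2 ≤ peak n k := by
  simp only [peak, Nat.even_iff]
  split_ifs <;> omega

theorem peak_succ_le (n k : ℕ) : peak (n + 1) k ≤ (n + 1) / 2 + 1 := by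
  simp only [peak, Nat.even_iff]
  split_ifs <;> omega

/-- For `c j = coeffZ p_j` this says `x ^ (n + 1) * p_j (1 / x) = p_{n+1-j}`. -/
def IsSymmetricFamily (n : ℕ) (c : ℕ → ℤ → ℝ) : Prop :=
  ∀ j ≤ n + 1, ∀ i : ℤ, c j i = c (n + 1 - j) (n + 1 - i)

def RisesToPeak (n : ℕ) (c : ℕ → ℤ → ℝ) : Prop :=
  ∀ j ≤ n + 1, ∀ i : ℤ, i < peak n j → c j i ≤ c j (i + 1)

/-- For `c j = coeffZ p_j`, the coefficients of `x ∑_{j<k} p_j + ∑_{k ≤ j ≤ n+1} p_j`. -/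
def succFamily (n : ℕ) (c : ℕ → ℤ → ℝ) (k : ℕ) (i : ℤ) : ℝ :=
  ∑ j ∈ range k, c j (i - 1) + ∑ j ∈ Ico k (n + 2), c j i

namespace IsSymmetricFamily

variable {n : ℕ} {c : ℕ → ℤ → ℝ}

theorem sum_Ico_reflect (hc : IsSymmetricFamily n c) (a : ℕ) {b : ℕ} (hb : b ≤ n + 2) (i : ℤ) :
    ∑ j ∈ Ico a b, c j i = ∑ j ∈ Ico (n + 2 - b) (n + 2 - a), c j (n + 1 - i) := by
  rw [← Finset.sum_Ico_reflect (fun j => c j (n + 1 - i)) a (show b ≤ n + 1 + 1 from hb)]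
  refine sum_congr rfl fun j hj => hc j ?_ i
  have := (mem_Ico.1 hj).2
  omega

theorem sum_Ico_sub_reflect (hc : IsSymmetricFamily n c) (a : ℕ) {b : ℕ} (hb : b ≤ n + 2) (i : ℤ) :
    ∑ j ∈ Ico a b, (c j (i + 1) - c j i) =
      -∑ j ∈ Ico (n + 2 - b) (n + 2 - a), (c j (n - i + 1) - c j (n - i)) := by
  rw [sum_sub_distrib, sum_sub_distrib, hc.sum_Ico_reflect a hb, hc.sum_Ico_reflect a hb i,
    show (n : ℤ) + 1 - (i + 1) = n - i by ring, show (n : ℤ) + 1 - i = n - i + 1 by ring]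
  ring

theorem sum_Ico_sub_eq_zero (hc : IsSymmetricFamily n c) {m : ℕ} (hm : n = 2 * m) {a : ℕ}
    (ha : a ≤ n + 2) : ∑ j ∈ Ico a (n + 2 - a), (c j (m + 1) - c j m) = 0 := by
  have h := hc.sum_Ico_sub_reflect a (b := n + 2 - a) (by omega) m
  rw [Nat.sub_sub_self ha, show (n : ℤ) - m = m by omega] at h
  linarith

theorem falls_of_rises (hc : IsSymmetricFamily n c) (hr : RisesToPeak n c) {j : ℕ}
    (hj : j ≤ n + 1) {i : ℤ} (hi : peak n j ≤ i) : c j (i + 1) ≤ c j i := by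
  have hpeak := peak_add_peak_sub hj
  rw [hc j hj, hc j hj i, show (n : ℤ) + 1 - (i + 1) = n - i by ring,
    show (n : ℤ) + 1 - i = n - i + 1 by ring]
  exact hr (n + 1 - j) (by omega) (n - i) (by omega)

theorem succFamily_symmetric (hc : IsSymmetricFamily n c) :
    IsSymmetricFamily (n + 1) (succFamily n c) := by
  intro k hk i
  simp only [succFamily, range_eq_Ico]
  rw [hc.sum_Ico_reflect 0 (by omega : k ≤ n + 2), hc.sum_Ico_reflect k le_rfl, add_comm,
    Nat.sub_zero, Nat.sub_self]
  push_cast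
  congr 2 <;> ext j <;> ring_nf

theorem succFamily_add_one_sub (hc : IsSymmetricFamily n c) (k : ℕ) (i : ℤ) :
    succFamily n c k (i + 1) - succFamily n c k i =
      ∑ j ∈ range k, (c j i - c j (i - 1)) -
        ∑ j ∈ range (n + 2 - k), (c j (n - i + 1) - c j (n - i)) := by
  have h := hc.sum_Ico_sub_reflect k le_rfl i
  rw [Nat.sub_self, ← range_eq_Ico, sum_sub_distrib] at h
  rw [succFamily, succFamily, add_sub_cancel_right, sum_sub_distrib]
  linarith

theorem succFamily_rises_at_half (hc : IsSymmetricFamily n c) (hr : RisesToPeak n c) {k m : ℕ}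
    (hk : k ≤ n + 2) (hm : m = (n + 1) / 2) (hpk : peak (n + 1) k = m + 1) :
    succFamily n c k m ≤ succFamily n c k (m + 1) := by
  have rise : ∀ j ≤ n + 1, ∀ i : ℤ, i ≤ peak n j → 0 ≤ c j i - c j (i - 1) := fun j hj i hi =>
    sub_nonneg.2 (by simpa using hr j hj (i - 1) (by omega))
  have fall : ∀ j ≤ n + 1, ∀ i : ℤ, peak n j ≤ i → c j (i + 1) - c j i ≤ 0 := fun j hj i hi =>
    sub_nonpos.2 (hc.falls_of_rises hr hj hi)
  rw [← sub_nonneg, hc.succFamily_add_one_sub, sub_nonneg]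
  obtain ⟨r, rfl | rfl⟩ := Nat.even_or_odd' n
  · obtain rfl : m = r := by omega
    have step : ∀ j ≤ m, c j (m + 1) - c j m ≤ c j m - c j (m - 1) := fun j hj => by
      have hpeak : peak (2 * m) j = m := by
        rw [peak, if_pos (even_two_mul m), if_pos (by omega)]
        omega
      linarith [fall j (by omega) m (by rw [hpeak]), rise j (by omega) m (by rw [hpeak])]
    rw [show ((2 * m : ℕ) : ℤ) - m = m by omega]
    rcases le_or_gt k (m + 1) with hkm | hkm
    · rw [← sum_range_add_sum_Ico _ (show k ≤ 2 * m + 2 - k by omega),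
        hc.sum_Ico_sub_eq_zero rfl hk, add_zero]
      exact sum_le_sum fun j hj => step j (by simp at hj; omega)
    · calc _ ≤ ∑ j ∈ range (2 * m + 2 - k), (c j m - c j (m - 1)) :=
            sum_le_sum fun j hj => step j (by simp at hj; omega)
        _ ≤ _ := sum_le_sum_of_subset_of_nonneg (range_subset_range.2 (by omega)) fun j hj _ =>
            rise j (by simp at hj; omega) m (by have := half_le_peak (2 * m) j; omega)
  · obtain rfl : m = r + 1 := by omega
    have hkm : r + 1 < k := by
      simp only [peak, Nat.even_iff] at hpk
      split_ifs at hpk <;> omega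
    rw [show ((2 * r + 1 : ℕ) : ℤ) - (r + 1 : ℕ) = (r + 1 : ℕ) - 1 by omega, sub_add_cancel]
    exact sum_le_sum_of_subset_of_nonneg (range_subset_range.2 (by omega)) fun j hj _ =>
      rise j (by simp at hj; omega) (r + 1 : ℕ) (by have := half_le_peak (2 * r + 1) j; omega)

theorem succFamily_rises (hc : IsSymmetricFamily n c) (hr : RisesToPeak n c) :
    RisesToPeak (n + 1) (succFamily n c) := by
  intro k hk i hi
  have hpk := peak_succ_le n k
  rcases lt_or_eq_of_le (show i ≤ ((n + 1) / 2 : ℕ) by omega) with hlt | rfl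
  · simp only [succFamily, add_sub_cancel_right]
    gcongr with j hj j hj
    · have hj := mem_range.1 hj
      simpa using hr j (by omega) (i - 1) (by have := half_le_peak n j; omega)
    · have hj := (mem_Ico.1 hj).2
      exact hr j (by omega) i (by have := half_le_peak n j; omega)
  · exact hc.succFamily_rises_at_half hr hk rfl (by omega)

end IsSymmetricFamily

def pBWeight (n k : ℕ) : ℝ := if k = 0 ∨ k = n + 2 then 1 else 2

theorem pBWeight_sub {n k : ℕ} (hk : k ≤ n + 2) : pBWeight n (n + 2 - k) = pBWeight n k := by
  simp only [pBWeight]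
  split_ifs <;> first | rfl | omega

theorem pBWeight_pos (n k : ℕ) : 0 < pBWeight n k := by
  unfold pBWeight
  split_ifs <;> norm_num

theorem pB_zero_zero : pB 0 0 = 1 := by rw [pB]

theorem pB_zero_one : pB 0 1 = Polynomial.X := by rw [pB]

theorem pB_succ {n k : ℕ} (hk : k ≤ n + 2) :
    pB (n + 1) k = pBWeight n k •
      (Polynomial.X * ∑ j ∈ range k, pB n j + ∑ j ∈ Ico k (n + 2), pB n j) := by
  rcases k with _ | k
  · rw [pB, pBWeight, if_pos (Or.inl rfl), one_smul, range_zero, sum_empty, mul_zero, zero_add,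
      range_eq_Ico]
  rw [pB]
  by_cases hkn : k + 1 ≤ n + 1
  · rw [if_pos hkn, pBWeight, if_neg (by omega), two_smul, ← Ico_add_one_right_eq_Icc,
      show n + 1 + 1 = n + 2 from rfl]
    ring
  · obtain rfl : k = n + 1 := by omega
    simp [pBWeight]

theorem coeffZ_pB_succ {n k : ℕ} (hk : k ≤ n + 2) (i : ℤ) :
    coeffZ (pB (n + 1) k) i = pBWeight n k * succFamily n (fun j => coeffZ (pB n j)) k i := by
  rw [pB_succ hk, coeffZ_smul, coeffZ_add, coeffZ_X_mul, coeffZ_sum, coeffZ_sum, succFamily]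

theorem pB_coeffZ_symmetric_and_rises (n : ℕ) :
    IsSymmetricFamily n (fun j => coeffZ (pB n j)) ∧ RisesToPeak n (fun j => coeffZ (pB n j)) := by
  induction n with
  | zero =>
    refine ⟨fun j hj i => ?_, fun j hj i hi => ?_⟩ <;> interval_cases j <;>
      simp [pB_zero_zero, pB_zero_one, peak, coeffZ_one, coeffZ_X] at * <;>
      split_ifs <;> (try norm_num) <;> omega
  | succ n ih =>
    obtain ⟨hc, hr⟩ := ih
    refine ⟨fun k hk i => ?_, fun k hk i hi => ?_⟩
    · dsimp only
      rw [coeffZ_pB_succ hk, coeffZ_pB_succ (by omega), pBWeight_sub hk,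
        hc.succFamily_symmetric k hk i]
    · dsimp only
      rw [coeffZ_pB_succ hk, coeffZ_pB_succ hk]
      exact mul_le_mul_of_nonneg_left (hc.succFamily_rises hr k hk i hi) (pBWeight_pos n k).le

/-- The coefficient sequence `(a_0, …, a_{n+1})` of `p^B_{n,k}` is unimodal with a peak at
position `p`, where `p = (n+1)/2` if `n` is odd, `p = n/2` if `n` is even and `k ≤ n/2`,
and `p = n/2 + 1` if `n` is even and `k ≥ n/2 + 1`. -/
theorem pB_unimodal (n k : ℕ) (hk : k ≤ n + 1) (p : ℕ)
    (hp : (Odd n → p = (n + 1) / 2) ∧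
          (Even n → k ≤ n / 2 → p = n / 2) ∧
          (Even n → n / 2 + 1 ≤ k → p = n / 2 + 1)) :
    (∀ i < p, (pB n k).coeff i ≤ (pB n k).coeff (i + 1)) ∧
      (∀ i, p ≤ i → i ≤ n → (pB n k).coeff (i + 1) ≤ (pB n k).coeff i) := by
  obtain rfl : p = peak n k := by
    rcases Nat.even_or_odd n with hn | hn
    · rw [peak, if_pos hn]
      split_ifs with hkn
      exacts [hp.2.1 hn hkn, hp.2.2 hn (by omega)]
    · rw [peak, if_neg (Nat.not_even_iff_odd.2 hn), hp.1 hn]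
  obtain ⟨hc, hr⟩ := pB_coeffZ_symmetric_and_rises n
  refine ⟨fun i hi => ?_, fun i hi _ => ?_⟩
  · simpa only [← Nat.cast_add_one, coeffZ_natCast] using hr k hk i (by exact_mod_cast hi)
  · simpa only [← Nat.cast_add_one, coeffZ_natCast] using
      hc.falls_of_rises hr hk (i := i) (by exact_mod_cast hi)
end
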